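/- Let H₀, H₁, K₁ be complex Hilbert spaces, and let T₀ ∈ B(H₀), T₁ ∈ B(H₁), V₁ ∈ B(K₁), K ∈ B(H₁, K₁), A ∈ B(H₁, H₀). Define the block operators V on K₁ ⊕₂ H₁ by V(k, h) = (V₁k + Kh, T₁h), R on H₀ ⊕₂ H₁ by R(x, h) = (T₀x + Ah, T₁h), and R₀ on H₀ ⊕₂ K₁ ⊕₂ H₁ by R₀(x, k, h) = (T₀x + Ah, V₁k + Kh, T₁h). If V is polynomially bounded, then R is polynomially bounded if and only if R₀ is polynomially bounded. -/

import Mathlib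

noncomputable section

/-- An operator `T` is polynomially bounded if `‖p(T)‖ ≤ M · sup_{|z| ≤ 1} |p(z)|`
for some `M > 0` and all polynomials `p`. -/
def PolynomiallyBounded {H : Type*} [NormedAddCommGroup H] [NormedSpace ℂ H] (T : H →L[ℂ] H) : Prop :=
  ∃ M : ℝ, 0 < M ∧ ∀ p : Polynomial ℂ,
    ‖Polynomial.aeval T p‖ ≤ M * sSup ((fun z : ℂ => ‖p.eval z‖) '' {z : ℂ | ‖z‖ ≤ 1})

/-!
With `P (x, k, h) = (x, h)` and `Q (x, k, h) = (k, h)` we have `P R₀ = R P` and `Q R₀ = V Q`,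
hence `P p(R₀) = p(R) P` and `Q p(R₀) = p(V) Q` for every polynomial `p`. As `P` is a contraction
with the isometric right inverse `(x, h) ↦ (x, 0, h)`, the first identity gives
`‖p(R)‖ ≤ ‖p(R₀)‖`. As `‖u‖ ≤ ‖P u‖ + ‖Q u‖`, the two identities together give
`‖p(R₀)‖ ≤ ‖p(R)‖ + ‖p(V)‖`.
-/

open Polynomial

section Intertwining

variable {𝕜 E F G : Type*} [NontriviallyNormedField 𝕜]
  [NormedAddCommGroup E] [NormedSpace 𝕜 E] [NormedAddCommGroup F] [NormedSpace 𝕜 F]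
  [NormedAddCommGroup G] [NormedSpace 𝕜 G]
  {A : E →L[𝕜] E} {B : F →L[𝕜] F} {C : G →L[𝕜] G}

theorem ContinuousLinearMap.comp_aeval_of_comp_eq (P : E →L[𝕜] F) (h : P ∘L A = B ∘L P)
    (p : 𝕜[X]) : P ∘L aeval A p = aeval B p ∘L P := by
  induction p using Polynomial.induction_on with
  | C a =>
    ext x
    simp [Algebra.algebraMap_eq_smul_one]
  | add p q hp hq =>
    simp only [map_add, ContinuousLinearMap.comp_add, ContinuousLinearMap.add_comp, hp, hq]
  | monomial n a ih =>
    rw [pow_succ, ← mul_assoc, map_mul (aeval A), map_mul (aeval B), aeval_X, aeval_X,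
      ContinuousLinearMap.mul_def, ContinuousLinearMap.mul_def, ← ContinuousLinearMap.comp_assoc,
      ih, ContinuousLinearMap.comp_assoc, h, ContinuousLinearMap.comp_assoc]

theorem ContinuousLinearMap.map_aeval_apply_of_comp_eq (P : E →L[𝕜] F) (h : P ∘L A = B ∘L P)
    (p : 𝕜[X]) (x : E) : P (aeval A p x) = aeval B p (P x) :=
  DFunLike.congr_fun (ContinuousLinearMap.comp_aeval_of_comp_eq P h p) x

theorem norm_aeval_le_of_comp_eq {P : E →L[𝕜] F} {J : F → E} (h : P ∘L A = B ∘L P)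
    (hPJ : ∀ y, P (J y) = y) (hP : ∀ x, ‖P x‖ ≤ ‖x‖) (hJ : ∀ y, ‖J y‖ ≤ ‖y‖) (p : 𝕜[X]) :
    ‖aeval B p‖ ≤ ‖aeval A p‖ := by
  refine ContinuousLinearMap.opNorm_le_bound _ (norm_nonneg _) fun y => ?_
  calc ‖aeval B p y‖ = ‖P (aeval A p (J y))‖ := by
        rw [ContinuousLinearMap.map_aeval_apply_of_comp_eq P h, hPJ]
    _ ≤ ‖aeval A p (J y)‖ := hP _
    _ ≤ ‖aeval A p‖ * ‖y‖ := (aeval A p).le_opNorm_of_le (hJ y)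

theorem norm_aeval_le_add_of_comp_eq {P : E →L[𝕜] F} {Q : E →L[𝕜] G}
    (hP : P ∘L A = B ∘L P) (hQ : Q ∘L A = C ∘L Q) (hPle : ∀ x, ‖P x‖ ≤ ‖x‖)
    (hQle : ∀ x, ‖Q x‖ ≤ ‖x‖) (hPQ : ∀ x, ‖x‖ ≤ ‖P x‖ + ‖Q x‖) (p : 𝕜[X]) :
    ‖aeval A p‖ ≤ ‖aeval B p‖ + ‖aeval C p‖ := by
  refine ContinuousLinearMap.opNorm_le_bound _ (by positivity) fun x => ?_
  calc ‖aeval A p x‖ ≤ ‖P (aeval A p x)‖ + ‖Q (aeval A p x)‖ := hPQ _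
    _ = ‖aeval B p (P x)‖ + ‖aeval C p (Q x)‖ := by
        rw [ContinuousLinearMap.map_aeval_apply_of_comp_eq P hP,
          ContinuousLinearMap.map_aeval_apply_of_comp_eq Q hQ]
    _ ≤ ‖aeval B p‖ * ‖x‖ + ‖aeval C p‖ * ‖x‖ :=
        add_le_add ((aeval B p).le_opNorm_of_le (hPle x)) ((aeval C p).le_opNorm_of_le (hQle x))
    _ = (‖aeval B p‖ + ‖aeval C p‖) * ‖x‖ := by ring

end Intertwining

section TransferOfBounds

variable {E F G : Type*} [NormedAddCommGroup E] [NormedSpace ℂ E] [NormedAddCommGroup F]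
  [NormedSpace ℂ F] [NormedAddCommGroup G] [NormedSpace ℂ G]
  {A : E →L[ℂ] E} {B : F →L[ℂ] F} {C : G →L[ℂ] G}

theorem PolynomiallyBounded.of_norm_aeval_le (hB : PolynomiallyBounded B)
    (h : ∀ p : ℂ[X], ‖aeval A p‖ ≤ ‖aeval B p‖) : PolynomiallyBounded A := by
  obtain ⟨M, hM, hBp⟩ := hB
  exact ⟨M, hM, fun p => (h p).trans (hBp p)⟩

theorem PolynomiallyBounded.of_norm_aeval_le_add (hB : PolynomiallyBounded B)
    (hC : PolynomiallyBounded C) (h : ∀ p : ℂ[X], ‖aeval A p‖ ≤ ‖aeval B p‖ + ‖aeval C p‖) :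
    PolynomiallyBounded A := by
  obtain ⟨M, hM, hBp⟩ := hB
  obtain ⟨N, hN, hCp⟩ := hC
  refine ⟨M + N, add_pos hM hN, fun p => ?_⟩
  linarith [h p, hBp p, hCp p]

end TransferOfBounds

section DropMiddle

variable (𝕜 E F G : Type*) [NontriviallyNormedField 𝕜]
  [NormedAddCommGroup E] [NormedSpace 𝕜 E] [NormedAddCommGroup F] [NormedSpace 𝕜 F]
  [NormedAddCommGroup G] [NormedSpace 𝕜 G]

def WithLp.dropMiddleL : WithLp 2 (E × WithLp 2 (F × G)) →L[𝕜] WithLp 2 (E × G) :=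
  (WithLp.prodContinuousLinearEquiv 2 𝕜 E G).symm.toContinuousLinearMap ∘L
    ((ContinuousLinearMap.id 𝕜 E).prodMap (WithLp.sndL 2 𝕜 F G)) ∘L
      (WithLp.prodContinuousLinearEquiv 2 𝕜 E (WithLp 2 (F × G))).toContinuousLinearMap

variable {𝕜 E F G}

@[simp]
theorem WithLp.dropMiddleL_apply (u : WithLp 2 (E × WithLp 2 (F × G))) :
    WithLp.dropMiddleL 𝕜 E F G u = WithLp.toLp 2 (u.fst, u.snd.snd) := rfl

theorem WithLp.norm_dropMiddleL_apply_le (u : WithLp 2 (E × WithLp 2 (F × G))) :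
    ‖WithLp.dropMiddleL 𝕜 E F G u‖ ≤ ‖u‖ := by
  refine (pow_le_pow_iff_left₀ (norm_nonneg _) (norm_nonneg _) two_ne_zero).1 ?_
  rw [WithLp.prod_norm_sq_eq_of_L2, WithLp.prod_norm_sq_eq_of_L2 u]
  simp only [WithLp.dropMiddleL_apply, WithLp.toLp_fst, WithLp.toLp_snd]
  gcongr
  exact WithLp.norm_snd_le _ u.snd

theorem WithLp.norm_le_norm_dropMiddleL_add_norm_snd (u : WithLp 2 (E × WithLp 2 (F × G))) :
    ‖u‖ ≤ ‖WithLp.dropMiddleL 𝕜 E F G u‖ + ‖u.snd‖ := by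
  refine (pow_le_pow_iff_left₀ (norm_nonneg _) (by positivity) two_ne_zero).1 ?_
  have hfst := WithLp.norm_fst_le _ (WithLp.dropMiddleL 𝕜 E F G u)
  rw [WithLp.prod_norm_sq_eq_of_L2 u]
  simp only [WithLp.dropMiddleL_apply, WithLp.toLp_fst] at hfst ⊢
  nlinarith [norm_nonneg u.snd, norm_nonneg u.fst, norm_nonneg (WithLp.toLp 2 (u.fst, u.snd.snd))]

theorem WithLp.norm_toLp_zero_middle (w : WithLp 2 (E × G)) :
    ‖WithLp.toLp 2 (w.fst, WithLp.toLp 2 ((0 : F), w.snd))‖ = ‖w‖ := by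
  rw [← sq_eq_sq₀ (norm_nonneg _) (norm_nonneg _), WithLp.prod_norm_sq_eq_of_L2,
    WithLp.prod_norm_sq_eq_of_L2 w]
  simp

end DropMiddle

section BlockOperators

variable {𝕜 E F G : Type*} [NontriviallyNormedField 𝕜]
  [NormedAddCommGroup E] [NormedSpace 𝕜 E] [NormedAddCommGroup F] [NormedSpace 𝕜 F]
  [NormedAddCommGroup G] [NormedSpace 𝕜 G]
  {T₀ : E →L[𝕜] E} {T₁ : G →L[𝕜] G} {V₁ : F →L[𝕜] F} {K : G →L[𝕜] F} {A : G →L[𝕜] E}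
  {V : WithLp 2 (F × G) →L[𝕜] WithLp 2 (F × G)} {R : WithLp 2 (E × G) →L[𝕜] WithLp 2 (E × G)}
  {R₀ : WithLp 2 (E × WithLp 2 (F × G)) →L[𝕜] WithLp 2 (E × WithLp 2 (F × G))}

theorem dropMiddleL_comp_eq_comp_dropMiddleL
    (hR : ∀ x h, R ((WithLp.equiv 2 (E × G)).symm (x, h))
      = (WithLp.equiv 2 (E × G)).symm (T₀ x + A h, T₁ h))
    (hR₀ : ∀ x k h, R₀ ((WithLp.equiv 2 (E × WithLp 2 (F × G))).symm
        (x, (WithLp.equiv 2 (F × G)).symm (k, h)))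
      = (WithLp.equiv 2 (E × WithLp 2 (F × G))).symm
        (T₀ x + A h, (WithLp.equiv 2 (F × G)).symm (V₁ k + K h, T₁ h))) :
    WithLp.dropMiddleL 𝕜 E F G ∘L R₀ = R ∘L WithLp.dropMiddleL 𝕜 E F G := by
  ext ⟨x, ⟨k, h⟩⟩ : 1
  simp only [WithLp.equiv_symm_apply] at hR hR₀
  simp [hR, hR₀]

theorem sndL_comp_eq_comp_sndL
    (hV : ∀ k h, V ((WithLp.equiv 2 (F × G)).symm (k, h))
      = (WithLp.equiv 2 (F × G)).symm (V₁ k + K h, T₁ h))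
    (hR₀ : ∀ x k h, R₀ ((WithLp.equiv 2 (E × WithLp 2 (F × G))).symm
        (x, (WithLp.equiv 2 (F × G)).symm (k, h)))
      = (WithLp.equiv 2 (E × WithLp 2 (F × G))).symm
        (T₀ x + A h, (WithLp.equiv 2 (F × G)).symm (V₁ k + K h, T₁ h))) :
    WithLp.sndL 2 𝕜 E (WithLp 2 (F × G)) ∘L R₀ = V ∘L WithLp.sndL 2 𝕜 E (WithLp 2 (F × G)) := by
  ext ⟨x, ⟨k, h⟩⟩ : 1
  simp only [WithLp.equiv_symm_apply] at hV hR₀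
  simp [hV, hR₀]

end BlockOperators

theorem polynomiallyBounded_R_iff_R₀_general
    {H₀ H₁ K₁ : Type}
    [NormedAddCommGroup H₀] [InnerProductSpace ℂ H₀]
    [NormedAddCommGroup H₁] [InnerProductSpace ℂ H₁]
    [NormedAddCommGroup K₁] [InnerProductSpace ℂ K₁]
    (T₀ : H₀ →L[ℂ] H₀) (T₁ : H₁ →L[ℂ] H₁) (V₁ : K₁ →L[ℂ] K₁)
    (K : H₁ →L[ℂ] K₁) (A : H₁ →L[ℂ] H₀)
    (V : WithLp 2 (K₁ × H₁) →L[ℂ] WithLp 2 (K₁ × H₁))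
    (hV : ∀ (k : K₁) (h : H₁),
      V ((WithLp.equiv 2 (K₁ × H₁)).symm (k, h))
        = (WithLp.equiv 2 (K₁ × H₁)).symm (V₁ k + K h, T₁ h))
    (R : WithLp 2 (H₀ × H₁) →L[ℂ] WithLp 2 (H₀ × H₁))
    (hR : ∀ (x : H₀) (h : H₁),
      R ((WithLp.equiv 2 (H₀ × H₁)).symm (x, h))
        = (WithLp.equiv 2 (H₀ × H₁)).symm (T₀ x + A h, T₁ h))
    (R₀ : WithLp 2 (H₀ × WithLp 2 (K₁ × H₁)) →L[ℂ] WithLp 2 (H₀ × WithLp 2 (K₁ × H₁)))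
    (hR₀ : ∀ (x : H₀) (k : K₁) (h : H₁),
      R₀ ((WithLp.equiv 2 (H₀ × WithLp 2 (K₁ × H₁))).symm
            (x, (WithLp.equiv 2 (K₁ × H₁)).symm (k, h)))
        = (WithLp.equiv 2 (H₀ × WithLp 2 (K₁ × H₁))).symm
            (T₀ x + A h, (WithLp.equiv 2 (K₁ × H₁)).symm (V₁ k + K h, T₁ h)))
    (hVpb : PolynomiallyBounded V) :
    PolynomiallyBounded R ↔ PolynomiallyBounded R₀ := by
  have hdrop := dropMiddleL_comp_eq_comp_dropMiddleL hR hR₀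
  have hsnd := sndL_comp_eq_comp_sndL hV hR₀
  constructor
  · intro hRpb
    exact hRpb.of_norm_aeval_le_add hVpb <| norm_aeval_le_add_of_comp_eq hdrop hsnd
      WithLp.norm_dropMiddleL_apply_le (WithLp.norm_snd_le _)
      WithLp.norm_le_norm_dropMiddleL_add_norm_snd
  · intro hR₀pb
    exact hR₀pb.of_norm_aeval_le <| norm_aeval_le_of_comp_eq hdrop
      (J := fun w => WithLp.toLp 2 (w.fst, WithLp.toLp 2 (0, w.snd))) (fun _ => rfl)
      WithLp.norm_dropMiddleL_apply_le fun w => (WithLp.norm_toLp_zero_middle w).le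

/-- Proposition 2.5 (1), polynomially bounded case: with
`V(k,h) = (V₁k + Kh, T₁h)`, `R(x,h) = (T₀x + Ah, T₁h)` and
`R₀(x,k,h) = (T₀x + Ah, V₁k + Kh, T₁h)`, if `V` is polynomially bounded then
`R` is polynomially bounded iff `R₀` is polynomially bounded. -/
theorem polynomiallyBounded_R_iff_R₀
    {H₀ H₁ K₁ : Type}
    [NormedAddCommGroup H₀] [InnerProductSpace ℂ H₀] [CompleteSpace H₀]
    [NormedAddCommGroup H₁] [InnerProductSpace ℂ H₁] [CompleteSpace H₁]
    [NormedAddCommGroup K₁] [InnerProductSpace ℂ K₁] [CompleteSpace K₁]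
    (T₀ : H₀ →L[ℂ] H₀) (T₁ : H₁ →L[ℂ] H₁) (V₁ : K₁ →L[ℂ] K₁)
    (K : H₁ →L[ℂ] K₁) (A : H₁ →L[ℂ] H₀)
    (V : WithLp 2 (K₁ × H₁) →L[ℂ] WithLp 2 (K₁ × H₁))
    (hV : ∀ (k : K₁) (h : H₁),
      V ((WithLp.equiv 2 (K₁ × H₁)).symm (k, h))
        = (WithLp.equiv 2 (K₁ × H₁)).symm (V₁ k + K h, T₁ h))
    (R : WithLp 2 (H₀ × H₁) →L[ℂ] WithLp 2 (H₀ × H₁))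
    (hR : ∀ (x : H₀) (h : H₁),
      R ((WithLp.equiv 2 (H₀ × H₁)).symm (x, h))
        = (WithLp.equiv 2 (H₀ × H₁)).symm (T₀ x + A h, T₁ h))
    (R₀ : WithLp 2 (H₀ × WithLp 2 (K₁ × H₁)) →L[ℂ] WithLp 2 (H₀ × WithLp 2 (K₁ × H₁)))
    (hR₀ : ∀ (x : H₀) (k : K₁) (h : H₁),
      R₀ ((WithLp.equiv 2 (H₀ × WithLp 2 (K₁ × H₁))).symm
            (x, (WithLp.equiv 2 (K₁ × H₁)).symm (k, h)))
        = (WithLp.equiv 2 (H₀ × WithLp 2 (K₁ × H₁))).symm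
            (T₀ x + A h, (WithLp.equiv 2 (K₁ × H₁)).symm (V₁ k + K h, T₁ h)))
    (hVpb : PolynomiallyBounded V) :
    PolynomiallyBounded R ↔ PolynomiallyBounded R₀ :=
  polynomiallyBounded_R_iff_R₀_general T₀ T₁ V₁ K A V hV R hR R₀ hR₀ hVpb
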